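/- arXiv:math/0304282 — 3 statements merged into one kernel-verified Lean document; each statement's English description precedes it below -/
import Mathlib

section
/- The exponential vectors {EXP h : h ∈ H} in the symmetric Fock space over a Hilbert space H are linearly independent. -/
/-!
Pairing with exponential vectors sends `EXP a` to the function `w ↦ ⟪EXP w, EXP a⟫ = exp ⟪w, a⟫`.
These are pairwise distinct homomorphisms from the additive group `H` to the multiplicative monoid
of `ℝ`, and distinct characters are linearly independent (Dedekind–Artin).
-/

open scoped RealInnerProductSpace

section

variable {H : Type*} [NormedAddCommGroup H] [InnerProductSpace ℝ H]

noncomputable def expInnerChar (a : H) : Multiplicative H →* ℝ where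
  toFun w := Real.exp ⟪w.toAdd, a⟫
  map_one' := by simp
  map_mul' w w' := by simp [inner_add_left, Real.exp_add]

theorem expInnerChar_injective : Function.Injective (expInnerChar (H := H)) := by
  intro a b hab
  have h : ∀ w : H, ⟪w, a⟫ = ⟪w, b⟫ := fun w =>
    Real.exp_injective (DFunLike.congr_fun hab (Multiplicative.ofAdd w))
  rw [← sub_eq_zero, ← inner_self_eq_zero (𝕜 := ℝ), inner_sub_right, h, sub_self]

theorem linearIndependent_exp_inner :
    LinearIndependent ℝ (fun a : H => fun w : Multiplicative H => Real.exp ⟪w.toAdd, a⟫) :=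
  (linearIndependent_monoidHom (Multiplicative H) ℝ).comp _ expInnerChar_injective

end

theorem lp_inner_eq_exp_inner {H : Type*} [NormedAddCommGroup H] [InnerProductSpace ℝ H]
    {S : ℕ → Type*} [∀ n, NormedAddCommGroup (S n)] [∀ n, InnerProductSpace ℝ (S n)]
    {tpow : ∀ n, H → S n} (hpow : ∀ (n : ℕ) (u v : H), ⟪tpow n u, tpow n v⟫ = ⟪u, v⟫ ^ n)
    {E : H → lp S 2} (hE : ∀ (h : H) (n : ℕ), E h n = (Real.sqrt (n.factorial : ℝ))⁻¹ • tpow n h)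
    (u v : H) : ⟪E u, E v⟫ = Real.exp ⟪u, v⟫ := by
  have hterm (n : ℕ) : ⟪E u n, E v n⟫ = (n.factorial : ℝ)⁻¹ • ⟪u, v⟫ ^ n := by
    rw [hE, hE, real_inner_smul_left, real_inner_smul_right, hpow, smul_eq_mul, ← mul_assoc,
      ← mul_inv, Real.mul_self_sqrt (Nat.cast_nonneg _)]
  rw [lp.inner_eq_tsum, Real.exp_eq_exp_ℝ, NormedSpace.exp_eq_tsum ℝ]
  simp_rw [hterm]

/-- The symmetric Fock space over `H` is modeled as `lp S 2`, where `S n` is the `n`-th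
symmetric tensor power of `H` (characterized by `⟪h^{⊗n}, g^{⊗n}⟫ = ⟪h, g⟫ ^ n` for the
elementary symmetric tensors `tpow n h = h^{⊗n}`), and the exponential vector `E h = EXP h`
has `n`-th component `h^{⊗n} / √(n!)`.  The family of exponential vectors
`{EXP h : h ∈ H}` is linearly independent. -/
theorem fock_exp_linearIndependent
    {H : Type*} [NormedAddCommGroup H] [InnerProductSpace ℝ H]
    (S : ℕ → Type*) [∀ n, NormedAddCommGroup (S n)] [∀ n, InnerProductSpace ℝ (S n)]
    (tpow : ∀ n, H → S n)
    (hpow : ∀ (n : ℕ) (u v : H), ⟪tpow n u, tpow n v⟫ = ⟪u, v⟫ ^ n)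
    (E : H → lp S 2)
    (hE : ∀ (h : H) (n : ℕ), E h n = (Real.sqrt (n.factorial : ℝ))⁻¹ • tpow n h) :
    LinearIndependent ℝ E := by
  let pairing : lp S 2 →ₗ[ℝ] Multiplicative H → ℝ :=
    LinearMap.pi fun w => (innerSL ℝ (E w.toAdd)).toLinearMap
  refine LinearIndependent.of_comp pairing ?_
  convert (linearIndependent_exp_inner (H := H)) using 1
  ext a w
  exact lp_inner_eq_exp_inner hpow hE w.toAdd a
end

section
/- The Charlier polynomials are orthogonal with respect to the Poisson distribution with parameter a: e^{−a} ∑_{k≥0} Cₙᵃ(k) Cₘᵃ(k) aᵏ/k! = δ_{nm} aⁿ n! for all n, m ≥ 0 and a > 0. -/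
open Finset

private lemma ff_cast (k s : ℕ) :
    (∏ i ∈ Finset.range s, ((k : ℝ) - (i : ℝ))) = (k.descFactorial s : ℝ) := by
  induction s with
  | zero => simp
  | succ s ih =>
    rw [Finset.prod_range_succ, ih, Nat.descFactorial_succ]
    by_cases h : s ≤ k
    · push_cast [h]; ring
    · have h1 : k.descFactorial s = 0 := Nat.descFactorial_of_lt (by omega)
      have h2 : k - s = 0 := by omega
      rw [h1, h2]; simp

private lemma hasSum_dF (a : ℝ) (s : ℕ) :
    HasSum (fun k : ℕ => (k.descFactorial s : ℝ) * a ^ k / (k.factorial : ℝ))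
      (a ^ s * Real.exp a) := by
  have key : ∀ t : ℕ, ((t + s).descFactorial s : ℝ) * a ^ (t + s) / ((t + s).factorial : ℝ)
      = a ^ s * (a ^ t / (t.factorial : ℝ)) := by
    intro t
    have h1 : (t.factorial) * ((t + s).descFactorial s) = (t + s).factorial := by
      have := Nat.factorial_mul_descFactorial (Nat.le_add_left s t)
      simpa using this
    have h2 : ((t + s).descFactorial s : ℝ) = ((t + s).factorial : ℝ) / (t.factorial : ℝ) := by
      rw [eq_div_iff (by exact_mod_cast t.factorial_ne_zero), mul_comm]
      exact_mod_cast h1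
    rw [h2, pow_add]
    have h3 : ((t + s).factorial : ℝ) ≠ 0 := by exact_mod_cast (t + s).factorial_ne_zero
    have h4 : (t.factorial : ℝ) ≠ 0 := by exact_mod_cast t.factorial_ne_zero
    field_simp
  have hexp : HasSum (fun t : ℕ => a ^ s * (a ^ t / (t.factorial : ℝ)))
      (a ^ s * Real.exp a) := by
    rw [Real.exp_eq_exp_ℝ]
    exact (NormedSpace.expSeries_div_hasSum_exp a).mul_left _
  have := (hasSum_nat_add_iff (f := fun k : ℕ =>
      (k.descFactorial s : ℝ) * a ^ k / (k.factorial : ℝ)) s).mp (by simpa [key] using hexp)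
  have hz : ∑ k ∈ Finset.range s, ((k.descFactorial s : ℝ) * a ^ k / (k.factorial : ℝ)) = 0 :=
    Finset.sum_eq_zero fun i hi => by
      simp [Nat.descFactorial_of_lt (Finset.mem_range.mp hi)]
  rw [hz, add_zero] at this
  exact this

-- real version of choose absorption: (i - r) * C(i,r) = (r+1) * C(i,r+1)
private lemma choose_absorb (i r : ℕ) :
    ((i : ℝ) - r) * (i.choose r : ℝ) = ((r : ℝ) + 1) * (i.choose (r + 1) : ℝ) := by
  by_cases h : r ≤ i
  · have hc := congrArg (Nat.cast : ℕ → ℝ) (Nat.choose_succ_right_eq i r)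
    push_cast [Nat.cast_sub h] at hc
    linarith [hc]
  · have h1 : i.choose r = 0 := Nat.choose_eq_zero_of_lt (by omega)
    have h2 : i.choose (r+1) = 0 := Nat.choose_eq_zero_of_lt (by omega)
    rw [h1, h2]; simp

private lemma ff_mul_ff (x : ℝ) (i : ℕ) : ∀ j : ℕ,
    (∏ t ∈ Finset.range i, (x - t)) * (∏ t ∈ Finset.range j, (x - t))
      = ∑ r ∈ Finset.range (j + 1), (i.choose r : ℝ) * (j.choose r : ℝ) * (r.factorial : ℝ)
          * ∏ t ∈ Finset.range (i + (j - r)), (x - t) := by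
  intro j
  induction j with
  | zero => simp
  | succ j ih =>
    have lhs_eq :
        (∏ t ∈ Finset.range i, (x - t)) * (∏ t ∈ Finset.range (j+1), (x - t))
        = ∑ r ∈ Finset.range (j + 1),
            ((i.choose r : ℝ) * (j.choose r : ℝ) * (r.factorial : ℝ)
              * ∏ t ∈ Finset.range (i + (j - r) + 1), (x - t)
            + (i.choose r : ℝ) * (j.choose r : ℝ) * (r.factorial : ℝ) * ((i : ℝ) - r)
              * ∏ t ∈ Finset.range (i + (j - r)), (x - t)) := by
      rw [Finset.prod_range_succ, ← mul_assoc, ih, Finset.sum_mul]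
      refine Finset.sum_congr rfl fun r hr => ?_
      have hrj : r ≤ j := Nat.lt_succ_iff.mp (Finset.mem_range.mp hr)
      have hsplit : (∏ t ∈ Finset.range (i + (j - r)), (x - t)) * (x - (j : ℝ))
          = (∏ t ∈ Finset.range (i + (j - r) + 1), (x - t))
            + ((i : ℝ) - r) * ∏ t ∈ Finset.range (i + (j - r)), (x - t) := by
        rw [Finset.prod_range_succ]
        have : ((i + (j - r) : ℕ) : ℝ) = (i : ℝ) + (j : ℝ) - r := by
          push_cast [Nat.cast_sub hrj]; ring
        rw [this]; ring
      calc (i.choose r : ℝ) * (j.choose r : ℝ) * (r.factorial : ℝ)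
              * (∏ t ∈ Finset.range (i + (j - r)), (x - t)) * (x - (j : ℝ))
          = (i.choose r : ℝ) * (j.choose r : ℝ) * (r.factorial : ℝ)
              * ((∏ t ∈ Finset.range (i + (j - r)), (x - t)) * (x - (j:ℝ))) := by ring
        _ = _ := by rw [hsplit]; ring
    rw [lhs_eq, Finset.sum_add_distrib]
    -- now handle the two sums
    -- S1 = ∑_{r≤j} c_r * P (i+(j-r)+1), S2 = ∑_{r≤j} c_r (i-r) P(i+(j-r))
    -- RHS = ∑_{r ≤ j+1} C(i,r) C(j+1,r) r! P(i + (j+1-r))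
    rw [Finset.sum_range_succ' (fun r => (i.choose r : ℝ) * ((j+1).choose r : ℝ)
        * (r.factorial : ℝ) * ∏ t ∈ Finset.range (i + (j + 1 - r)), (x - t)) (j+1)]
    -- RHS = ∑_{s ∈ range (j+1)} f (s+1) + f 0
    have hf0 : (i.choose 0 : ℝ) * ((j+1).choose 0 : ℝ) * ((0:ℕ).factorial : ℝ)
        * ∏ t ∈ Finset.range (i + (j + 1 - 0)), (x - t)
        = ∏ t ∈ Finset.range (i + j + 1), (x - t) := by
      have h : i + (j + 1 - 0) = i + j + 1 := by omega
      rw [h]; norm_num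
    have hS1 : ∑ r ∈ Finset.range (j + 1),
        (i.choose r : ℝ) * (j.choose r : ℝ) * (r.factorial : ℝ)
          * ∏ t ∈ Finset.range (i + (j - r) + 1), (x - t)
        = (∏ t ∈ Finset.range (i + j + 1), (x - t))
          + ∑ s ∈ Finset.range (j + 1),
            (i.choose (s+1) : ℝ) * (j.choose (s+1) : ℝ) * ((s+1).factorial : ℝ)
              * ∏ t ∈ Finset.range (i + (j - s)), (x - t) := by
      rw [Finset.sum_range_succ' (fun r => (i.choose r : ℝ) * (j.choose r : ℝ)
          * (r.factorial : ℝ) * ∏ t ∈ Finset.range (i + (j - r) + 1), (x - t)) j]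
      rw [Finset.sum_range_succ (fun s => (i.choose (s+1) : ℝ) * (j.choose (s+1) : ℝ)
          * ((s+1).factorial : ℝ) * ∏ t ∈ Finset.range (i + (j - s)), (x - t)) j]
      have hlast : (i.choose (j+1) : ℝ) * (j.choose (j+1) : ℝ) * ((j+1).factorial : ℝ)
          * ∏ t ∈ Finset.range (i + (j - j)), (x - t) = 0 := by
        simp [Nat.choose_eq_zero_of_lt (Nat.lt_succ_self j)]
      rw [hlast, add_zero]
      have h0 : (i.choose 0 : ℝ) * (j.choose 0 : ℝ) * ((0:ℕ).factorial : ℝ)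
          * ∏ t ∈ Finset.range (i + (j - 0) + 1), (x - t)
          = ∏ t ∈ Finset.range (i + j + 1), (x - t) := by simp
      rw [h0, add_comm]
      congr 1
      refine Finset.sum_congr rfl fun s hs => ?_
      have hsj : s < j := Finset.mem_range.mp hs
      have : i + (j - (s+1)) + 1 = i + (j - s) := by omega
      rw [this]
    rw [hS1]
    -- remaining goal: match ∑ f(s+1) with ∑ B_s + ∑ g2_s
    have hterm : ∀ s ∈ Finset.range (j+1),
        (i.choose (s+1) : ℝ) * ((j+1).choose (s+1) : ℝ) * ((s+1).factorial : ℝ)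
          * ∏ t ∈ Finset.range (i + (j + 1 - (s+1))), (x - t)
        = (i.choose (s+1) : ℝ) * (j.choose (s+1) : ℝ) * ((s+1).factorial : ℝ)
            * (∏ t ∈ Finset.range (i + (j - s)), (x - t))
          + (i.choose s : ℝ) * (j.choose s : ℝ) * (s.factorial : ℝ) * ((i:ℝ) - s)
            * ∏ t ∈ Finset.range (i + (j - s)), (x - t) := by
      intro s hs
      have h1 : j + 1 - (s+1) = j - s := by omega
      rw [h1, Nat.choose_succ_succ (j) s]
      push_cast
      have habs : ((i:ℝ) - s) * (i.choose s : ℝ) = ((s:ℝ)+1) * (i.choose (s+1) : ℝ) :=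
        choose_absorb i s
      have hfac : ((s+1).factorial : ℝ) = ((s:ℝ)+1) * (s.factorial : ℝ) := by
        push_cast [Nat.factorial_succ]; ring
      rw [hfac]
      linear_combination (-(j.choose s : ℝ) * (s.factorial : ℝ)
        * (∏ t ∈ Finset.range (i + (j - s)), (x - (t:ℝ)))) * habs
    rw [Finset.sum_congr rfl hterm, Finset.sum_add_distrib, hf0]
    ring

private lemma alt_sum_choose (n r : ℕ) :
    (∑ i ∈ Finset.range (n + 1), (-1 : ℝ) ^ (n - i) * (n.choose i : ℝ) * (i.choose r : ℝ))
      = if r = n then 1 else 0 := by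
  by_cases hrn : r ≤ n
  · -- drop terms with i < r
    have hzero : ∀ i ∈ Finset.range r, (-1 : ℝ) ^ (n - i) * (n.choose i : ℝ) * (i.choose r : ℝ) = 0 := by
      intro i hi
      simp [Nat.choose_eq_zero_of_lt (Finset.mem_range.mp hi)]
    have hsplit : (∑ i ∈ Finset.range (n + 1), (-1 : ℝ) ^ (n - i) * (n.choose i : ℝ) * (i.choose r : ℝ))
        = ∑ i ∈ Finset.Ico r (n + 1), (-1 : ℝ) ^ (n - i) * (n.choose i : ℝ) * (i.choose r : ℝ) := by
      rw [Finset.range_eq_Ico, ← Finset.sum_Ico_consecutive _ (Nat.zero_le r) (by omega)]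
      rw [← Finset.range_eq_Ico] at *
      rw [Finset.sum_eq_zero hzero, zero_add]
    rw [hsplit, Finset.sum_Ico_eq_sum_range]
    have hlen : n + 1 - r = (n - r) + 1 := by omega
    rw [hlen]
    have hterm : ∀ s ∈ Finset.range ((n - r) + 1),
        (-1 : ℝ) ^ (n - (r + s)) * (n.choose (r + s) : ℝ) * ((r + s).choose r : ℝ)
        = (n.choose r : ℝ) * ((-1 : ℝ) ^ (n - r) * (-1 : ℝ) ^ s * ((n - r).choose s : ℝ)) := by
      intro s hs
      have hsnr : s ≤ n - r := Nat.lt_succ_iff.mp (Finset.mem_range.mp hs)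
      have h1 : n.choose (r + s) * (r + s).choose r = n.choose r * (n - r).choose s := by
        have := Nat.choose_mul (n := n) (Nat.le_add_right r s)
        simpa using this
      have h2 : ((n.choose (r+s) : ℝ)) * ((r+s).choose r : ℝ) = (n.choose r : ℝ) * ((n-r).choose s : ℝ) := by
        exact_mod_cast congrArg (Nat.cast : ℕ → ℝ) h1
      have h3 : (-1 : ℝ) ^ (n - (r + s)) = (-1 : ℝ) ^ (n - r) * (-1 : ℝ) ^ s := by
        have : (n - r) + s = (n - (r + s)) + 2 * s := by omega
        have := congrArg (fun e => (-1 : ℝ) ^ e) this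
        simp only [pow_add, pow_mul] at this
        norm_num at this
        linarith [this]
      rw [mul_assoc, h2, h3]; ring
    rw [Finset.sum_congr rfl hterm, ← Finset.mul_sum]
    have : ∑ s ∈ Finset.range ((n - r) + 1),
        ((-1 : ℝ) ^ (n - r) * (-1 : ℝ) ^ s * ((n - r).choose s : ℝ))
        = (-1 : ℝ) ^ (n - r) * ∑ s ∈ Finset.range ((n - r) + 1), ((-1 : ℝ) ^ s * ((n - r).choose s : ℝ)) := by
      rw [Finset.mul_sum]; exact Finset.sum_congr rfl fun s _ => by ring
    rw [this]
    have halt : (∑ s ∈ Finset.range ((n - r) + 1), ((-1 : ℝ) ^ s * ((n - r).choose s : ℝ)))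
        = if n - r = 0 then 1 else 0 := by
      have := Int.alternating_sum_range_choose (n := n - r)
      have := congrArg (Int.cast : ℤ → ℝ) this
      push_cast at this
      convert this using 2 <;> simp
    rw [halt]
    by_cases h : r = n
    · subst h; simp
    · have : n - r ≠ 0 := by omega
      simp [this, h]
  · have : ∀ i ∈ Finset.range (n + 1), (-1 : ℝ) ^ (n - i) * (n.choose i : ℝ) * (i.choose r : ℝ) = 0 := by
      intro i hi
      have : i < r := by have := Finset.mem_range.mp hi; omega
      simp [Nat.choose_eq_zero_of_lt this]
    rw [Finset.sum_eq_zero this, if_neg (by omega)]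





/-- The Charlier polynomial with parameter `a`:
`Cₙᵃ(x) = aⁿ ∑_{j=0}^{n} (−1)^{n−j} C(n,j) a^{−j} C(x,j) j!`, where
`C(x,j) j! = x(x−1)⋯(x−j+1)` is the falling factorial. -/
noncomputable def charlier (a : ℝ) (n : ℕ) (x : ℝ) : ℝ :=
  a ^ n * ∑ j ∈ Finset.range (n + 1),
    (-1 : ℝ) ^ (n - j) * (n.choose j : ℝ) * (∏ i ∈ Finset.range j, (x - (i : ℝ))) / a ^ j

/-- Orthogonality of the Charlier polynomials with respect to the Poisson distribution
with parameter `a`: `e^{−a} ∑_{k≥0} Cₙᵃ(k) Cₘᵃ(k) aᵏ/k! = δ_{nm} aⁿ n!`. -/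
theorem charlier_orthogonality (a : ℝ) (ha : 0 < a) (n m : ℕ) :
    Real.exp (-a) * ∑' k : ℕ, charlier a n (k : ℝ) * charlier a m (k : ℝ) * a ^ k / (k.factorial : ℝ)
      = if n = m then a ^ n * (n.factorial : ℝ) else 0 := by
  have ha' : a ≠ 0 := ne_of_gt ha
  have hpow : ∀ s : ℕ, a ^ s ≠ 0 := fun s => pow_ne_zero s ha'
  -- coefficients
  set c : ℕ → ℕ → ℝ := fun N i => a ^ N * ((-1 : ℝ) ^ (N - i) * (N.choose i : ℝ)) / a ^ i with hc
  have hch : ∀ (N k : ℕ), charlier a N (k : ℝ)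
      = ∑ i ∈ Finset.range (N + 1), c N i * ∏ t ∈ Finset.range i, ((k : ℝ) - (t : ℝ)) := by
    intro N k
    rw [charlier, Finset.mul_sum]
    exact Finset.sum_congr rfl fun i _ => by rw [hc]; ring
  -- per-k expansion into a triple finite sum
  have hterm : ∀ k : ℕ,
      charlier a n (k : ℝ) * charlier a m (k : ℝ) * a ^ k / (k.factorial : ℝ)
      = ∑ i ∈ Finset.range (n + 1), ∑ j ∈ Finset.range (m + 1), ∑ r ∈ Finset.range (j + 1),
          (c n i * c m j * ((i.choose r : ℝ) * (j.choose r : ℝ) * (r.factorial : ℝ)))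
            * ((k.descFactorial (i + (j - r)) : ℝ) * a ^ k / (k.factorial : ℝ)) := by
    intro k
    rw [hch n k, hch m k, Finset.sum_mul_sum, Finset.sum_mul, Finset.sum_div]
    refine Finset.sum_congr rfl fun i _ => ?_
    rw [Finset.sum_mul, Finset.sum_div]
    refine Finset.sum_congr rfl fun j _ => ?_
    have hprod : (∏ t ∈ Finset.range i, ((k : ℝ) - t)) * (∏ t ∈ Finset.range j, ((k : ℝ) - t))
        = ∑ r ∈ Finset.range (j + 1), (i.choose r : ℝ) * (j.choose r : ℝ) * (r.factorial : ℝ)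
            * (k.descFactorial (i + (j - r)) : ℝ) := by
      rw [ff_mul_ff]
      exact Finset.sum_congr rfl fun r _ => by rw [ff_cast]
    calc c n i * (∏ t ∈ Finset.range i, ((k:ℝ) - t)) * (c m j * ∏ t ∈ Finset.range j, ((k:ℝ) - t))
          * a ^ k / (k.factorial : ℝ)
        = (c n i * c m j) * (((∏ t ∈ Finset.range i, ((k:ℝ) - t)) * ∏ t ∈ Finset.range j, ((k:ℝ) - t))
            * a ^ k / (k.factorial : ℝ)) := by ring
      _ = _ := by
          rw [hprod, Finset.sum_mul, Finset.sum_div, Finset.mul_sum]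
          exact Finset.sum_congr rfl fun r _ => by ring
  -- HasSum for the whole series
  have hsum : HasSum
      (fun k : ℕ => charlier a n (k : ℝ) * charlier a m (k : ℝ) * a ^ k / (k.factorial : ℝ))
      (∑ i ∈ Finset.range (n + 1), ∑ j ∈ Finset.range (m + 1), ∑ r ∈ Finset.range (j + 1),
        (c n i * c m j * ((i.choose r : ℝ) * (j.choose r : ℝ) * (r.factorial : ℝ)))
          * (a ^ (i + (j - r)) * Real.exp a)) := by
    have H := hasSum_sum (s := Finset.range (n + 1))
      (f := fun i (k : ℕ) => ∑ j ∈ Finset.range (m + 1), ∑ r ∈ Finset.range (j + 1),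
        (c n i * c m j * ((i.choose r : ℝ) * (j.choose r : ℝ) * (r.factorial : ℝ)))
          * ((k.descFactorial (i + (j - r)) : ℝ) * a ^ k / (k.factorial : ℝ)))
      (a := fun i => ∑ j ∈ Finset.range (m + 1), ∑ r ∈ Finset.range (j + 1),
        (c n i * c m j * ((i.choose r : ℝ) * (j.choose r : ℝ) * (r.factorial : ℝ)))
          * (a ^ (i + (j - r)) * Real.exp a))
      (fun i _ => hasSum_sum fun j _ => hasSum_sum fun r _ =>
        (hasSum_dF a (i + (j - r))).mul_left _)
    have hfun : (fun k : ℕ =>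
        charlier a n (k : ℝ) * charlier a m (k : ℝ) * a ^ k / (k.factorial : ℝ))
        = fun k : ℕ => ∑ i ∈ Finset.range (n + 1), ∑ j ∈ Finset.range (m + 1),
            ∑ r ∈ Finset.range (j + 1),
            (c n i * c m j * ((i.choose r : ℝ) * (j.choose r : ℝ) * (r.factorial : ℝ)))
              * ((k.descFactorial (i + (j - r)) : ℝ) * a ^ k / (k.factorial : ℝ)) :=
      funext hterm
    rw [hfun]
    exact H
  rw [hsum.tsum_eq]
  -- cancel the exponentials
  have hcancel : Real.exp (-a) * Real.exp a = 1 := by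
    rw [← Real.exp_add]; simp
  have step1 : Real.exp (-a) * ∑ i ∈ Finset.range (n + 1), ∑ j ∈ Finset.range (m + 1),
      ∑ r ∈ Finset.range (j + 1),
        (c n i * c m j * ((i.choose r : ℝ) * (j.choose r : ℝ) * (r.factorial : ℝ)))
          * (a ^ (i + (j - r)) * Real.exp a)
      = ∑ i ∈ Finset.range (n + 1), ∑ j ∈ Finset.range (m + 1), ∑ r ∈ Finset.range (j + 1),
        (c n i * c m j * ((i.choose r : ℝ) * (j.choose r : ℝ) * (r.factorial : ℝ)))
          * a ^ (i + (j - r)) := by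
    rw [Finset.mul_sum]
    refine Finset.sum_congr rfl fun i _ => ?_
    rw [Finset.mul_sum]
    refine Finset.sum_congr rfl fun j _ => ?_
    rw [Finset.mul_sum]
    refine Finset.sum_congr rfl fun r _ => ?_
    calc Real.exp (-a) * ((c n i * c m j * ((i.choose r : ℝ) * (j.choose r : ℝ) * (r.factorial : ℝ)))
          * (a ^ (i + (j - r)) * Real.exp a))
        = (c n i * c m j * ((i.choose r : ℝ) * (j.choose r : ℝ) * (r.factorial : ℝ)))
            * a ^ (i + (j - r)) * (Real.exp (-a) * Real.exp a) := by ring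
      _ = _ := by rw [hcancel, mul_one]
  rw [step1]
  -- rewrite each term in separated form
  have step2 : ∀ i ∈ Finset.range (n + 1), ∀ j ∈ Finset.range (m + 1), ∀ r ∈ Finset.range (j + 1),
      (c n i * c m j * ((i.choose r : ℝ) * (j.choose r : ℝ) * (r.factorial : ℝ)))
        * a ^ (i + (j - r))
      = ((-1 : ℝ) ^ (n - i) * (n.choose i : ℝ) * (i.choose r : ℝ))
        * (((-1 : ℝ) ^ (m - j) * (m.choose j : ℝ) * (j.choose r : ℝ))
          * ((r.factorial : ℝ) * a ^ (n + m) / a ^ r)) := by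
    intro i _ j _ r hr
    have hrj : r ≤ j := Nat.lt_succ_iff.mp (Finset.mem_range.mp hr)
    have h5 : a ^ (i + (j - r)) = a ^ i * a ^ (j - r) := pow_add a i (j - r)
    have h6 : a ^ j = a ^ (j - r) * a ^ r := by rw [← pow_add]; congr 1; omega
    have h7 : a ^ (n + m) = a ^ n * a ^ m := pow_add a n m
    rw [hc]
    simp only [h5, h6, h7]
    field_simp
  rw [Finset.sum_congr rfl fun i hi => Finset.sum_congr rfl fun j hj =>
    Finset.sum_congr rfl fun r hr => step2 i hi j hj r hr]
  -- extend the r-range to range (m+1)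
  have step3 : ∀ i ∈ Finset.range (n + 1), ∀ j ∈ Finset.range (m + 1),
      (∑ r ∈ Finset.range (j + 1),
        ((-1 : ℝ) ^ (n - i) * (n.choose i : ℝ) * (i.choose r : ℝ))
          * (((-1 : ℝ) ^ (m - j) * (m.choose j : ℝ) * (j.choose r : ℝ))
            * ((r.factorial : ℝ) * a ^ (n + m) / a ^ r)))
      = ∑ r ∈ Finset.range (m + 1),
        ((-1 : ℝ) ^ (n - i) * (n.choose i : ℝ) * (i.choose r : ℝ))
          * (((-1 : ℝ) ^ (m - j) * (m.choose j : ℝ) * (j.choose r : ℝ))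
            * ((r.factorial : ℝ) * a ^ (n + m) / a ^ r)) := by
    intro i _ j hj
    have hjm : j ≤ m := Nat.lt_succ_iff.mp (Finset.mem_range.mp hj)
    refine Finset.sum_subset (Finset.range_subset_range.mpr (by omega)) ?_
    intro r _ hrnot
    have : j < r := by
      have := Finset.mem_range.not.mp hrnot; omega
    simp [Nat.choose_eq_zero_of_lt this]
  rw [Finset.sum_congr rfl fun i hi => Finset.sum_congr rfl fun j hj => step3 i hi j hj]
  -- swap sums: i,j,r → r,i,j and factor
  rw [Finset.sum_congr rfl fun i (_ : i ∈ Finset.range (n+1)) => Finset.sum_comm]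
  rw [Finset.sum_comm]
  have fact : ∀ (s t : Finset ℕ) (A B : ℕ → ℝ) (d : ℝ),
      (∑ i ∈ s, ∑ j ∈ t, A i * (B j * d)) = (∑ i ∈ s, A i) * ((∑ j ∈ t, B j) * d) := by
    intro s t A B d
    rw [Finset.sum_mul]
    refine Finset.sum_congr rfl fun i _ => ?_
    rw [Finset.sum_mul, Finset.mul_sum]
  have step4 : ∀ r ∈ Finset.range (m + 1),
      (∑ i ∈ Finset.range (n + 1), ∑ j ∈ Finset.range (m + 1),
        ((-1 : ℝ) ^ (n - i) * (n.choose i : ℝ) * (i.choose r : ℝ))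
          * (((-1 : ℝ) ^ (m - j) * (m.choose j : ℝ) * (j.choose r : ℝ))
            * ((r.factorial : ℝ) * a ^ (n + m) / a ^ r)))
      = (if r = n then (1:ℝ) else 0) * ((if r = m then (1:ℝ) else 0)
          * ((r.factorial : ℝ) * a ^ (n + m) / a ^ r)) := by
    intro r _
    rw [fact, alt_sum_choose n r, alt_sum_choose m r]
  rw [Finset.sum_congr rfl step4]
  -- final evaluation
  by_cases hnm : n = m
  · subst hnm
    rw [Finset.sum_eq_single_of_mem n (Finset.self_mem_range_succ n)
      (fun b _ hb => by simp [hb])]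
    norm_num
    rw [pow_add]
    field_simp
  · rw [if_neg hnm]
    refine Finset.sum_eq_zero fun r _ => ?_
    by_cases h1 : r = n
    · by_cases h2 : r = m
      · exact absurd (h1 ▸ h2) hnm
      · simp [h2]
    · simp [h1]
end

section
/- For a < t < 1 (or as formal power series), the generating function of the kernel K(k,x) = ∑_{n≥0} Hₙᵃ(x) Cₙᵃ(k)/(aⁿ n!) satisfies ∑_{k≥0} (tᵏ/k!) K(k,x) = exp(2t + tx/a − x − t²/(2a) − a/2). -/
/-- The scaled Hermite polynomial `Hₙᵃ(x) = a^{n/2} Hₙ(x/√a)`, where `Hₙ` is the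
probabilists' Hermite polynomial `Hₙ(x) = (−1)ⁿ e^{x²/2} (d/dx)ⁿ e^{−x²/2}`. -/
noncomputable def hermiteScaled (a : ℝ) (n : ℕ) (x : ℝ) : ℝ :=
  Real.sqrt a ^ n * Polynomial.aeval (x / Real.sqrt a) (Polynomial.hermite n)

open Finset Polynomial

section Aux

lemma exp_hasSum (x : ℝ) : HasSum (fun n : ℕ => x ^ n / n.factorial) (Real.exp x) := by
  have hs := Real.summable_pow_div_factorial x
  have h : ∑' n : ℕ, x ^ n / (n.factorial : ℝ) = Real.exp x := by
    rw [Real.exp_eq_exp_ℝ, NormedSpace.exp_eq_tsum_div]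
  exact h ▸ hs.hasSum

lemma sum_range_even {M : Type*} [AddCommMonoid M] (n : ℕ) (f : ℕ → M)
    (hf : ∀ j ≤ n, ¬ Even j → f j = 0) :
    ∑ j ∈ range (n + 1), f j = ∑ m ∈ range (n / 2 + 1), f (2 * m) := by
  rw [← Finset.sum_filter_of_ne (p := fun j => Even j) (fun j hj hne => by
    by_contra h
    exact hne (hf j (Nat.lt_succ_iff.mp (mem_range.mp hj)) h))]
  refine Finset.sum_nbij' (fun j => j / 2) (fun m => 2 * m) ?_ ?_ ?_ ?_ ?_
  · intro j hj
    simp only [mem_filter, mem_range, Nat.even_iff] at hj ⊢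
    omega
  · intro m hm
    simp only [mem_filter, mem_range, Nat.even_iff] at hm ⊢
    omega
  · intro j hj
    simp only [mem_filter, mem_range, Nat.even_iff] at hj
    show 2 * (j / 2) = j
    omega
  · intro m hm
    show 2 * m / 2 = m
    omega
  · intro j hj
    simp only [mem_filter, mem_range, Nat.even_iff] at hj
    have h2 : 2 * (j / 2) = j := by omega
    show f j = f (2 * (j / 2))
    rw [h2]

lemma two_mul_factorial (m : ℕ) :
    (2 * m).factorial = 2 ^ m * m.factorial * (2 * m - 1).doubleFactorial := by
  cases m with
  | zero => rfl
  | succ m =>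
    have h1 : 2 * (m + 1) = (2 * m + 1) + 1 := by ring
    have h2 : 2 * (m + 1) - 1 = 2 * m + 1 := by omega
    rw [h2, h1, Nat.factorial_eq_mul_doubleFactorial, ← h1, Nat.doubleFactorial_two_mul]

noncomputable def Pser (c y : ℝ) (n : ℕ) : ℝ :=
  ∑ m ∈ range (n / 2 + 1), c ^ m / m.factorial * y ^ (n - 2 * m) / (n - 2 * m).factorial

lemma hasSum_Pser (c y s : ℝ) :
    HasSum (fun n => s ^ n * Pser c y n) (Real.exp (s * y) * Real.exp (c * s ^ 2)) := by
  set A : ℕ → ℝ := fun i => (s * y) ^ i / i.factorial with hA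
  set B : ℕ → ℝ := fun j =>
    if Even j then (c * s ^ 2) ^ (j / 2) / (j / 2).factorial else 0 with hB
  have hBcomp : ∀ m : ℕ, B (2 * m) = (c * s ^ 2) ^ m / m.factorial := by
    intro m
    have hdiv : 2 * m / 2 = m := by omega
    simp [hB, even_two_mul m, hdiv]
  have hBzero : ∀ j, ¬ Even j → B j = 0 := fun j h => by simp [hB, h]
  have hInj : Function.Injective (fun m : ℕ => 2 * m) := fun a b h => by
    dsimp only at h; omega
  have hrange : ∀ j ∉ Set.range (fun m : ℕ => 2 * m), B j = 0 := by
    intro j hj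
    refine hBzero j fun hev => hj ?_
    rw [Nat.even_iff] at hev
    exact ⟨j / 2, by dsimp only; omega⟩
  have hBsum : HasSum B (Real.exp (c * s ^ 2)) := by
    rw [← Function.Injective.hasSum_iff hInj hrange]
    exact (exp_hasSum (c * s ^ 2)).congr_fun fun m => hBcomp m
  have hAn : Summable fun i => ‖A i‖ := by
    refine (Real.summable_pow_div_factorial |s * y|).congr fun i => ?_
    rw [Real.norm_eq_abs, hA]
    rw [abs_div, abs_pow, Nat.abs_cast]
  have hBn : Summable fun j => ‖B j‖ := by
    rw [← Function.Injective.summable_iff hInj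
      (fun j hj => by rw [Real.norm_eq_abs, hrange j hj, abs_zero])]
    refine (Real.summable_pow_div_factorial |c * s ^ 2|).congr fun m => ?_
    show |c * s ^ 2| ^ m / (m.factorial : ℝ) = ‖B (2 * m)‖
    rw [Real.norm_eq_abs, hBcomp m, abs_div, abs_pow, Nat.abs_cast]
  have hAsum : HasSum A (Real.exp (s * y)) := exp_hasSum (s * y)
  have hsum : Summable fun n => ∑ p ∈ antidiagonal n, A p.1 * B p.2 :=
    (summable_norm_sum_mul_antidiagonal_of_summable_norm hAn hBn).of_norm
  have htsum : ∑' n, ∑ p ∈ antidiagonal n, A p.1 * B p.2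
      = Real.exp (s * y) * Real.exp (c * s ^ 2) := by
    rw [← tsum_mul_tsum_eq_tsum_sum_antidiagonal_of_summable_norm hAn hBn,
      hAsum.tsum_eq, hBsum.tsum_eq]
  have hfin : HasSum (fun n => ∑ p ∈ antidiagonal n, A p.1 * B p.2)
      (Real.exp (s * y) * Real.exp (c * s ^ 2)) := htsum ▸ hsum.hasSum
  refine hfin.congr_fun fun n => ?_
  rw [Finset.Nat.sum_antidiagonal_eq_sum_range_succ_mk,
      ← Finset.sum_range_reflect]
  simp only [Nat.succ_sub_one]
  have e2 : ∑ j ∈ range (n + 1), A (n - j) * B (n - (n - j))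
      = ∑ j ∈ range (n + 1), A (n - j) * B j := by
    refine sum_congr rfl fun j hj => ?_
    have : j ≤ n := Nat.lt_succ_iff.mp (mem_range.mp hj)
    rw [Nat.sub_sub_self this]
  rw [e2, sum_range_even n _ (fun j hj hodd => by rw [hBzero j hodd, mul_zero])]
  rw [Pser, Finset.mul_sum]
  refine sum_congr rfl fun m hm => ?_
  have h2m : 2 * m ≤ n := by
    have := mem_range.mp hm; omega
  have hs2 : s ^ (n - 2 * m) * s ^ (2 * m) = s ^ n := by
    rw [← pow_add]; congr 1; omega
  rw [hBcomp m, hA]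
  show s ^ n * (c ^ m / m.factorial * y ^ (n - 2 * m) / (n - 2 * m).factorial)
    = (s * y) ^ (n - 2 * m) / ((n - 2 * m).factorial : ℝ)
      * ((c * s ^ 2) ^ m / m.factorial)
  rw [mul_pow s y, mul_pow c (s ^ 2), ← pow_mul s 2 m, ← hs2]
  ring

lemma hermite_expand (y : ℝ) (n : ℕ) :
    (aeval y (hermite n) : ℝ) =
      ∑ m ∈ range (n / 2 + 1), (-1 : ℝ) ^ m *
        (((2 * m - 1).doubleFactorial * n.choose (n - 2 * m) : ℕ) : ℝ) * y ^ (n - 2 * m) := by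
  rw [aeval_eq_sum_range, natDegree_hermite, ← Finset.sum_range_reflect]
  simp only [Nat.succ_sub_one]
  rw [sum_range_even n _ (fun j hj hodd => ?_)]
  · refine sum_congr rfl fun m hm => ?_
    have h2m : 2 * m ≤ n := by have := mem_range.mp hm; omega
    have hev : Even (n + (n - 2 * m)) := ⟨n - m, by omega⟩
    rw [coeff_hermite_of_even_add hev]
    have h1 : n - (n - 2 * m) = 2 * m := by omega
    have h3 : 2 * m / 2 = m := by omega
    rw [h1, h3, zsmul_eq_mul]
    push_cast
    ring
  · have hodd' : Odd (n + (n - j)) := by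
      rw [Nat.odd_iff]
      rw [Nat.even_iff] at hodd
      omega
    rw [coeff_hermite_of_odd_add hodd', zero_smul]

lemma coeff_term (n m : ℕ) (h : 2 * m ≤ n) (c y : ℝ) :
    (2 * c) ^ m * (((2 * m - 1).doubleFactorial * n.choose (n - 2 * m) : ℕ) : ℝ)
        * y ^ (n - 2 * m)
      = (n.factorial : ℝ) * (c ^ m / m.factorial * y ^ (n - 2 * m) / (n - 2 * m).factorial) := by
  have hch : ((n.choose (n - 2 * m)) : ℝ)
      = n.factorial / ((n - 2 * m).factorial * (2 * m).factorial) := by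
    have := Nat.cast_choose ℝ (show n - 2 * m ≤ n by omega)
    rwa [show n - (n - 2 * m) = 2 * m by omega] at this
  have h2 : ((2 * m).factorial : ℝ)
      = 2 ^ m * m.factorial * (2 * m - 1).doubleFactorial := by
    exact_mod_cast congrArg (Nat.cast : ℕ → ℝ) (two_mul_factorial m)
  have hD : ((2 * m - 1).doubleFactorial : ℝ) ≠ 0 :=
    Nat.cast_ne_zero.mpr (Nat.doubleFactorial_pos _).ne'
  have hm : (m.factorial : ℝ) ≠ 0 := Nat.cast_ne_zero.mpr m.factorial_ne_zero
  have hnm : ((n - 2 * m).factorial : ℝ) ≠ 0 := Nat.cast_ne_zero.mpr (Nat.factorial_ne_zero _)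
  push_cast
  rw [hch, h2, mul_pow]
  field_simp

lemma hermite_eq (y : ℝ) (n : ℕ) :
    (aeval y (hermite n) : ℝ) = n.factorial * Pser (-(1 : ℝ) / 2) y n := by
  rw [hermite_expand, Pser, Finset.mul_sum]
  refine sum_congr rfl fun m hm => ?_
  have h : 2 * m ≤ n := by have := mem_range.mp hm; omega
  have hc := coeff_term n m h (-(1 : ℝ) / 2) y
  rw [show (2 * (-(1 : ℝ) / 2)) = -1 by norm_num] at hc
  rw [hc]

lemma hermite_abs_le (y : ℝ) (n : ℕ) :
    |(aeval y (hermite n) : ℝ)| ≤ n.factorial * Pser ((1 : ℝ) / 2) |y| n := by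
  rw [hermite_expand, Pser, Finset.mul_sum]
  refine (Finset.abs_sum_le_sum_abs _ _).trans (sum_le_sum fun m hm => ?_)
  have h : 2 * m ≤ n := by have := mem_range.mp hm; omega
  have hc := coeff_term n m h ((1 : ℝ) / 2) |y|
  rw [show (2 * ((1 : ℝ) / 2)) = 1 by norm_num, one_pow, one_mul] at hc
  rw [← hc, abs_mul, abs_mul, abs_pow, abs_pow, abs_neg, abs_one, one_pow, one_mul,
    Nat.abs_cast]

lemma hermite_hasSum (y s : ℝ) :
    HasSum (fun n => (aeval y (hermite n) : ℝ) * s ^ n / n.factorial)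
      (Real.exp (s * y - s ^ 2 / 2)) := by
  have h := hasSum_Pser (-(1 : ℝ) / 2) y s
  rw [← Real.exp_add, show s * y + -(1 : ℝ) / 2 * s ^ 2 = s * y - s ^ 2 / 2 by ring] at h
  refine h.congr_fun fun n => ?_
  rw [hermite_eq]
  have hn : (n.factorial : ℝ) ≠ 0 := Nat.cast_ne_zero.mpr n.factorial_ne_zero
  field_simp

lemma hermite_abs_summable (y s : ℝ) (hs : 0 ≤ s) :
    Summable (fun n => |(aeval y (hermite n) : ℝ)| * s ^ n / n.factorial) := by
  refine Summable.of_nonneg_of_le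
    (fun n => div_nonneg (mul_nonneg (abs_nonneg _) (pow_nonneg hs n)) (Nat.cast_nonneg _))
    (fun n => ?_) (hasSum_Pser ((1 : ℝ) / 2) |y| s).summable
  have h1 := hermite_abs_le y n
  have hn : (0 : ℝ) < n.factorial := Nat.cast_pos.mpr n.factorial_pos
  calc |(aeval y (hermite n) : ℝ)| * s ^ n / n.factorial
      ≤ n.factorial * Pser ((1 : ℝ) / 2) |y| n * s ^ n / n.factorial := by
        gcongr
    _ = s ^ n * Pser ((1 : ℝ) / 2) |y| n := by field_simp

lemma prod_range_cast (k j : ℕ) :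
    ∏ i ∈ range j, ((k : ℝ) - (i : ℝ)) = (k.descFactorial j : ℝ) := by
  induction j with
  | zero => simp
  | succ j ih =>
    rw [prod_range_succ, ih, Nat.descFactorial_succ, Nat.cast_mul]
    rcases le_or_gt j k with h | h
    · rw [Nat.cast_sub h]; ring
    · rw [Nat.descFactorial_eq_zero_iff_lt.mpr h]
      simp

lemma desc_hasSum (t : ℝ) (j : ℕ) :
    HasSum (fun k : ℕ => t ^ k / k.factorial * (k.descFactorial j : ℝ))
      (t ^ j * Real.exp t) := by
  have hinj : Function.Injective (fun m : ℕ => m + j) := fun a b h => by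
    dsimp only at h; omega
  have hzero : ∀ k ∉ Set.range (fun m : ℕ => m + j),
      t ^ k / k.factorial * (k.descFactorial j : ℝ) = 0 := by
    intro k hk
    have hkj : k < j := by
      by_contra hc
      exact hk ⟨k - j, by dsimp only; omega⟩
    rw [Nat.descFactorial_eq_zero_iff_lt.mpr hkj, Nat.cast_zero, mul_zero]
  rw [← Function.Injective.hasSum_iff hinj hzero]
  refine HasSum.congr_fun ((exp_hasSum t).mul_left (t ^ j)) fun m => ?_
  show t ^ (m + j) / (m + j).factorial * ((m + j).descFactorial j : ℝ)
      = t ^ j * (t ^ m / m.factorial)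
  have hd : (m.factorial : ℝ) * ((m + j).descFactorial j : ℝ) = ((m + j).factorial : ℝ) := by
    have := Nat.factorial_mul_descFactorial (show j ≤ m + j by omega)
    rw [show m + j - j = m by omega] at this
    exact_mod_cast congrArg (Nat.cast : ℕ → ℝ) this
  have hm : (m.factorial : ℝ) ≠ 0 := Nat.cast_ne_zero.mpr m.factorial_ne_zero
  have hmj : ((m + j).factorial : ℝ) ≠ 0 := Nat.cast_ne_zero.mpr (m + j).factorial_ne_zero
  have hdf : ((m + j).descFactorial j : ℝ) = ((m + j).factorial : ℝ) / m.factorial := by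
    rw [eq_div_iff hm]
    linarith [hd]
  rw [hdf, pow_add]
  field_simp

lemma charlier_term (a t : ℝ) (n k : ℕ) :
    t ^ k / k.factorial * charlier a n (k : ℝ)
      = ∑ j ∈ range (n + 1), (a ^ n * (-1 : ℝ) ^ (n - j) * (n.choose j : ℝ) / a ^ j)
          * (t ^ k / k.factorial * (k.descFactorial j : ℝ)) := by
  rw [charlier]
  simp only [prod_range_cast]
  rw [Finset.mul_sum, Finset.mul_sum]
  exact sum_congr rfl fun j hj => by ring

lemma charlier_hasSum (a t : ℝ) (ha : a ≠ 0) (n : ℕ) :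
    HasSum (fun k : ℕ => t ^ k / k.factorial * charlier a n (k : ℝ))
      (Real.exp t * (t - a) ^ n) := by
  have hs : HasSum (fun k : ℕ => ∑ j ∈ range (n + 1),
        (a ^ n * (-1 : ℝ) ^ (n - j) * (n.choose j : ℝ) / a ^ j)
          * (t ^ k / k.factorial * (k.descFactorial j : ℝ)))
      (∑ j ∈ range (n + 1), (a ^ n * (-1 : ℝ) ^ (n - j) * (n.choose j : ℝ) / a ^ j)
          * (t ^ j * Real.exp t)) :=
    hasSum_sum fun j _ => (desc_hasSum t j).mul_left _
  have hval : ∑ j ∈ range (n + 1), (a ^ n * (-1 : ℝ) ^ (n - j) * (n.choose j : ℝ) / a ^ j)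
      * (t ^ j * Real.exp t) = Real.exp t * (t - a) ^ n := by
    have hb : (t - a) ^ n = a ^ n * (t / a + -1) ^ n := by
      rw [← mul_pow]
      congr 1
      field_simp
      ring
    rw [hb, add_pow, Finset.mul_sum, Finset.mul_sum]
    refine sum_congr rfl fun j hj => ?_
    rw [div_pow]
    have haj : (a : ℝ) ^ j ≠ 0 := pow_ne_zero _ ha
    field_simp
  rw [← hval]
  exact hs.congr_fun fun k => charlier_term a t n k

lemma charlier_abs_hasSum (a t : ℝ) (ha : a ≠ 0) (n : ℕ) :
    HasSum (fun k : ℕ => ∑ j ∈ range (n + 1),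
        (a ^ n * (n.choose j : ℝ) / a ^ j) * (t ^ k / k.factorial * (k.descFactorial j : ℝ)))
      (Real.exp t * (t + a) ^ n) := by
  have hs : HasSum _ (∑ j ∈ range (n + 1), (a ^ n * (n.choose j : ℝ) / a ^ j)
      * (t ^ j * Real.exp t)) :=
    hasSum_sum fun j (_ : j ∈ range (n + 1)) => (desc_hasSum t j).mul_left
      (a ^ n * (n.choose j : ℝ) / a ^ j)
  have hval : ∑ j ∈ range (n + 1), (a ^ n * (n.choose j : ℝ) / a ^ j)
      * (t ^ j * Real.exp t) = Real.exp t * (t + a) ^ n := by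
    have hb : (t + a) ^ n = a ^ n * (t / a + 1) ^ n := by
      rw [← mul_pow]
      congr 1
      field_simp
    rw [hb, add_pow, Finset.mul_sum, Finset.mul_sum]
    refine sum_congr rfl fun j hj => ?_
    rw [div_pow]
    have haj : (a : ℝ) ^ j ≠ 0 := pow_ne_zero _ ha
    field_simp
    ring
  rw [← hval]
  exact hs

lemma charlier_bound (a t : ℝ) (ha : 0 < a) (ht : 0 ≤ t) (n k : ℕ) :
    |t ^ k / k.factorial * charlier a n (k : ℝ)|
      ≤ ∑ j ∈ range (n + 1),
          (a ^ n * (n.choose j : ℝ) / a ^ j) * (t ^ k / k.factorial * (k.descFactorial j : ℝ)) := by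
  rw [charlier_term]
  refine (Finset.abs_sum_le_sum_abs _ _).trans (sum_le_sum fun j hj => le_of_eq ?_)
  have h1 : (0 : ℝ) ≤ t ^ k / k.factorial * (k.descFactorial j : ℝ) :=
    mul_nonneg (div_nonneg (pow_nonneg ht k) (Nat.cast_nonneg _)) (Nat.cast_nonneg _)
  rw [abs_mul, abs_of_nonneg h1, abs_div, abs_mul, abs_mul, abs_pow, abs_pow, abs_neg, abs_one,
    one_pow, mul_one, Nat.abs_cast, abs_of_pos ha, abs_of_pos (pow_pos ha j)]

end Aux

/-- Generating function of the kernel `K(k,x) = ∑_{n≥0} Hₙᵃ(x) Cₙᵃ(k)/(aⁿ n!)`: for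
`a < t < 1`, `∑_{k≥0} (tᵏ/k!) K(k,x) = exp (2t + tx/a − x − t²/(2a) − a/2)`. -/
theorem kernel_generating_function (a : ℝ) (ha : 0 < a) (x t : ℝ)
    (hat : a < t) (ht1 : t < 1) :
    ∑' k : ℕ, t ^ k / (k.factorial : ℝ)
        * (∑' n : ℕ, hermiteScaled a n x * charlier a n (k : ℝ) / (a ^ n * (n.factorial : ℝ)))
      = Real.exp (2 * t + t * x / a - x - t ^ 2 / (2 * a) - a / 2) := by
  have hsa : (0 : ℝ) < Real.sqrt a := Real.sqrt_pos.mpr ha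
  have hss : Real.sqrt a * Real.sqrt a = a := Real.mul_self_sqrt ha.le
  have ht0 : 0 < t := ha.trans hat
  set y : ℝ := x / Real.sqrt a with hy
  set F : ℕ → ℕ → ℝ := fun n k => t ^ k / k.factorial
      * (hermiteScaled a n x * charlier a n (k : ℝ) / (a ^ n * n.factorial)) with hF
  set g : ℕ → ℕ → ℝ := fun n k => ∑ j ∈ range (n + 1),
      (a ^ n * (n.choose j : ℝ) / a ^ j) * (t ^ k / k.factorial * (k.descFactorial j : ℝ)) with hg
  have hC : ∀ n : ℕ, (0 : ℝ) < a ^ n * n.factorial :=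
    fun n => mul_pos (pow_pos ha n) (Nat.cast_pos.mpr n.factorial_pos)
  -- pointwise bound
  have habs : ∀ n k, |F n k|
      ≤ (|hermiteScaled a n x| / (a ^ n * n.factorial)) * g n k := by
    intro n k
    have h1 : F n k = (hermiteScaled a n x / (a ^ n * n.factorial))
        * (t ^ k / k.factorial * charlier a n (k : ℝ)) := by rw [hF]; ring
    rw [h1, abs_mul, abs_div, abs_of_pos (hC n)]
    exact mul_le_mul_of_nonneg_left (charlier_bound a t ha ht0.le n k)
      (div_nonneg (abs_nonneg _) (hC n).le)
  have hrow : ∀ n, Summable (fun k => |F n k|) := fun n =>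
    Summable.of_nonneg_of_le (fun k => abs_nonneg _) (habs n)
      (((charlier_abs_hasSum a t ha.ne' n).summable).mul_left _)
  have hrowsum : ∀ n, ∑' k, |F n k|
      ≤ (|hermiteScaled a n x| / (a ^ n * n.factorial)) * (Real.exp t * (t + a) ^ n) := by
    intro n
    calc ∑' k, |F n k|
        ≤ ∑' k, (|hermiteScaled a n x| / (a ^ n * n.factorial)) * g n k :=
          Summable.tsum_le_tsum (habs n) (hrow n)
            (((charlier_abs_hasSum a t ha.ne' n).summable).mul_left _)
      _ = (|hermiteScaled a n x| / (a ^ n * n.factorial)) * (Real.exp t * (t + a) ^ n) :=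
          ((charlier_abs_hasSum a t ha.ne' n).mul_left _).tsum_eq
  have hmaj : Summable (fun n =>
      (|hermiteScaled a n x| / (a ^ n * n.factorial)) * (Real.exp t * (t + a) ^ n)) := by
    have h := (hermite_abs_summable y ((t + a) / Real.sqrt a)
      (by positivity)).mul_left (Real.exp t)
    refine h.congr fun n => ?_
    have hsan : (Real.sqrt a) ^ n ≠ 0 := pow_ne_zero _ hsa.ne'
    have han : (a : ℝ) ^ n ≠ 0 := pow_ne_zero _ ha.ne'
    have hfn : (n.factorial : ℝ) ≠ 0 := Nat.cast_ne_zero.mpr n.factorial_ne_zero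
    rw [hermiteScaled, abs_mul, abs_pow, abs_of_pos hsa, div_pow,
      show a ^ n = Real.sqrt a ^ n * Real.sqrt a ^ n by rw [← mul_pow, hss]]
    field_simp
    ring
  have hFabs : Summable (fun p : ℕ × ℕ => |F p.1 p.2|) := by
    rw [summable_prod_of_nonneg (fun p => abs_nonneg _)]
    exact ⟨fun n => hrow n,
      Summable.of_nonneg_of_le (fun n => tsum_nonneg fun k => abs_nonneg _) hrowsum hmaj⟩
  have hFs : Summable (Function.uncurry F) := by
    rw [← summable_abs_iff]
    exact hFabs
  calc ∑' k : ℕ, t ^ k / (k.factorial : ℝ)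
        * (∑' n : ℕ, hermiteScaled a n x * charlier a n (k : ℝ) / (a ^ n * (n.factorial : ℝ)))
      = ∑' (k : ℕ) (n : ℕ), F n k := by
        refine tsum_congr fun k => ?_
        exact (tsum_mul_left (a := t ^ k / (k.factorial : ℝ))
          (f := fun n : ℕ => hermiteScaled a n x * charlier a n (k : ℝ)
            / (a ^ n * (n.factorial : ℝ)))).symm
    _ = ∑' (n : ℕ) (k : ℕ), F n k := Summable.tsum_comm hFs
    _ = ∑' n : ℕ, (hermiteScaled a n x / (a ^ n * n.factorial))
          * (Real.exp t * (t - a) ^ n) := by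
        refine tsum_congr fun n => ?_
        calc ∑' k : ℕ, F n k
            = ∑' k : ℕ, (hermiteScaled a n x / (a ^ n * (n.factorial : ℝ)))
                * (t ^ k / (k.factorial : ℝ) * charlier a n (k : ℝ)) :=
              tsum_congr fun k => by rw [hF]; ring
          _ = (hermiteScaled a n x / (a ^ n * n.factorial))
                * ∑' k : ℕ, t ^ k / k.factorial * charlier a n (k : ℝ) := tsum_mul_left
          _ = (hermiteScaled a n x / (a ^ n * n.factorial)) * (Real.exp t * (t - a) ^ n) := by
              rw [(charlier_hasSum a t ha.ne' n).tsum_eq]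
    _ = Real.exp t * ∑' n : ℕ, (aeval y (hermite n) : ℝ)
          * ((t - a) / Real.sqrt a) ^ n / n.factorial := by
        rw [← tsum_mul_left]
        refine tsum_congr fun n => ?_
        have hsan : (Real.sqrt a) ^ n ≠ 0 := pow_ne_zero _ hsa.ne'
        have hfn : (n.factorial : ℝ) ≠ 0 := Nat.cast_ne_zero.mpr n.factorial_ne_zero
        rw [hermiteScaled, div_pow,
          show a ^ n = Real.sqrt a ^ n * Real.sqrt a ^ n by rw [← mul_pow, hss]]
        field_simp
        ring
    _ = Real.exp t * Real.exp (((t - a) / Real.sqrt a) * y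
          - ((t - a) / Real.sqrt a) ^ 2 / 2) := by
        rw [(hermite_hasSum y ((t - a) / Real.sqrt a)).tsum_eq]
    _ = Real.exp (2 * t + t * x / a - x - t ^ 2 / (2 * a) - a / 2) := by
        rw [← Real.exp_add]
        congr 1
        have h1 : ((t - a) / Real.sqrt a) * y = (t - a) * x / a := by
          rw [hy, div_mul_div_comm, hss]
        have h2 : ((t - a) / Real.sqrt a) ^ 2 = (t - a) ^ 2 / a := by
          rw [div_pow, sq (Real.sqrt a), hss]
        rw [h1, h2]
        field_simp
        ring
end
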